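/- arXiv:1409.4697 — 6 statements merged into one kernel-verified Lean document; each statement's English description precedes it below -/
import Mathlib

section
/- The Charlier polynomials c_n^a are orthogonal with respect to the discrete measure ρ_a = Σ_{x=0}^∞ (a^x/x!) δ_x: for m ≠ n, Σ_{x=0}^∞ c_m^a(x) c_n^a(x) a^x/x! = 0, provided a > 0. -/
/-!
The generating function of the Charlier polynomials is `∑ₙ cₙ(x) tⁿ = (1 + t)^x e^{-at}`, so
Vandermonde's identity gives `cₙ(x + y) = ∑_{i+l=n} C(y,i) c_l(x)`. For the weight
`ρ(x) = aˣ/x!`, shifting the summation index gives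
`∑ₓ C(x,j) f(x) ρ(x) = aʲ/j! ∑ₛ f(s+j) ρ(s)`. With `f = 1` and `e^{at} e^{-at} = 1` this yields
`∑ₓ cₙ(x) ρ(x) = eᵃ [n = 0]`; with `f = cₙ` it then yields
`∑ₓ C(x,j) cₙ(x) ρ(x) = aʲ/j! C(j,n) eᵃ`, which vanishes for `j < n`. As `c_m` is a combination
of the `C(x,j)` with `j ≤ m`, orthogonality follows.
-/

/-- The Charlier polynomial `c_n^a(x) = (1/n!) ∑_{j=0}^n (-a)^{n-j} C(n,j) C(x,j) j!`. -/
noncomputable def charlierFn (a : ℝ) (n : ℕ) (x : ℝ) : ℝ :=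
  (n.factorial : ℝ)⁻¹ *
    ∑ j ∈ Finset.range (n + 1),
      (-a) ^ (n - j) * (n.choose j : ℝ) * ∏ i ∈ Finset.range j, (x - (i : ℝ))

open Finset PowerSeries

lemma add_pow_div_factorial {K : Type*} [Field K] [CharZero K] (x y : K) (n : ℕ) :
    (x + y) ^ n / n.factorial =
      ∑ p ∈ antidiagonal n, x ^ p.1 / p.1.factorial * (y ^ p.2 / p.2.factorial) := by
  have := congrArg (coeff n) (exp_mul_exp_eq_exp_add (A := K) x y)
  simpa [coeff_mul, coeff_rescale, coeff_exp, div_eq_mul_inv, eq_comm] using this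

lemma Ring.factorial_mul_choose_eq_prod {R : Type*} [CommRing R] [BinomialRing R] (x : R)
    (j : ℕ) : (j.factorial : R) * Ring.choose x j = ∏ i ∈ range j, (x - i) := by
  rw [← nsmul_eq_mul, ← Ring.descPochhammer_eq_factorial_smul_choose, ← Polynomial.aeval_eq_smeval,
    ← descPochhammer_eval_eq_prod_range, ← descPochhammer_map (algebraMap ℤ R),
    Polynomial.eval_map_algebraMap]

lemma charlierFn_eq_sum_antidiagonal (a : ℝ) (n : ℕ) (x : ℝ) :
    charlierFn a n x = ∑ p ∈ antidiagonal n, Ring.choose x p.1 * ((-a) ^ p.2 / p.2.factorial) := by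
  rw [charlierFn, Nat.sum_antidiagonal_eq_sum_range_succ_mk, mul_sum]
  refine sum_congr rfl fun j hj => ?_
  have hjn : j ≤ n := Nat.lt_succ_iff.mp (mem_range.mp hj)
  rw [← Ring.factorial_mul_choose_eq_prod, Nat.cast_choose ℝ hjn]
  field_simp

lemma charlierFn_eq_coeff (a : ℝ) (n : ℕ) (x : ℝ) :
    charlierFn a n x = coeff n (PowerSeries.binomialSeries ℝ x * rescale (-a) (exp ℝ)) := by
  simp [charlierFn_eq_sum_antidiagonal, coeff_mul, coeff_rescale, coeff_exp, div_eq_mul_inv]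

lemma charlierFn_add (a : ℝ) (n : ℕ) (x y : ℝ) :
    charlierFn a n (x + y) = ∑ p ∈ antidiagonal n, Ring.choose y p.1 * charlierFn a p.2 x := by
  rw [charlierFn_eq_coeff, add_comm, PowerSeries.binomialSeries_add, mul_assoc, coeff_mul]
  simp [charlierFn_eq_coeff]

noncomputable def charlierWeight (a : ℝ) (x : ℕ) : ℝ := a ^ x / x.factorial

lemma hasSum_charlierWeight (a : ℝ) : HasSum (charlierWeight a) (Real.exp a) := by
  rw [Real.exp_eq_exp_ℝ]
  exact NormedSpace.expSeries_div_hasSum_exp a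

lemma choose_mul_charlierWeight_add (a : ℝ) (s j : ℕ) :
    ((s + j).choose j : ℝ) * charlierWeight a (s + j) =
      a ^ j / j.factorial * charlierWeight a s := by
  have h := Nat.add_choose_mul_factorial_mul_factorial s j
  rw [← @Nat.cast_inj ℝ] at h
  push_cast at h
  have hc : ((s + j).choose j : ℝ) ≠ 0 := Nat.cast_ne_zero.mpr (Nat.choose_pos (by omega)).ne'
  simp only [charlierWeight, ← h, pow_add]
  field_simp

lemma HasSum.choose_mul_charlierWeight {a S : ℝ} {f : ℕ → ℝ} (j : ℕ)
    (hf : HasSum (fun s => f (s + j) * charlierWeight a s) S) :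
    HasSum (fun x => (x.choose j : ℝ) * f x * charlierWeight a x) (a ^ j / j.factorial * S) := by
  have hlow : ∑ x ∈ range j, (x.choose j : ℝ) * f x * charlierWeight a x = 0 :=
    sum_eq_zero fun x hx => by simp [Nat.choose_eq_zero_of_lt (mem_range.mp hx)]
  rw [← hasSum_nat_add_iff' j, hlow, sub_zero]
  have hshift : (fun s => ((s + j).choose j : ℝ) * f (s + j) * charlierWeight a (s + j)) =
      fun s => a ^ j / j.factorial * (f (s + j) * charlierWeight a s) := by
    funext s
    rw [mul_right_comm, choose_mul_charlierWeight_add]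
    ring
  rw [hshift]
  exact hf.mul_left _

lemma hasSum_choose_mul_charlierWeight (a : ℝ) (j : ℕ) :
    HasSum (fun x : ℕ => (x.choose j : ℝ) * charlierWeight a x)
      (a ^ j / j.factorial * Real.exp a) := by
  simpa using
    HasSum.choose_mul_charlierWeight (f := fun _ => 1) j (by simpa using hasSum_charlierWeight a)

lemma hasSum_charlierFn_mul_charlierWeight (a : ℝ) (n : ℕ) :
    HasSum (fun x : ℕ => charlierFn a n x * charlierWeight a x)
      (if n = 0 then Real.exp a else 0) := by
  have hsum := hasSum_sum (s := antidiagonal n) fun p _ =>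
    (hasSum_choose_mul_charlierWeight a p.1).mul_left ((-a) ^ p.2 / p.2.factorial)
  have hfun : (fun x : ℕ => charlierFn a n x * charlierWeight a x) = fun x : ℕ =>
      ∑ p ∈ antidiagonal n,
        (-a) ^ p.2 / p.2.factorial * ((x.choose p.1 : ℝ) * charlierWeight a x) := by
    funext x
    rw [charlierFn_eq_sum_antidiagonal, sum_mul]
    refine sum_congr rfl fun p _ => ?_
    rw [Ring.choose_natCast]
    ring
  have hval : ∑ p ∈ antidiagonal n, (-a) ^ p.2 / p.2.factorial *
      (a ^ p.1 / p.1.factorial * Real.exp a) = if n = 0 then Real.exp a else 0 := by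
    simp_rw [mul_left_comm _ (a ^ _ / _), ← mul_assoc, ← sum_mul,
      ← add_pow_div_factorial, add_neg_cancel]
    rcases eq_or_ne n 0 with rfl | hn
    · simp
    · simp [hn]
  rwa [hfun, ← hval]

lemma hasSum_choose_mul_charlierFn_mul_charlierWeight (a : ℝ) (j n : ℕ) :
    HasSum (fun x : ℕ => (x.choose j : ℝ) * charlierFn a n x * charlierWeight a x)
      (a ^ j / j.factorial * (j.choose n * Real.exp a)) := by
  refine HasSum.choose_mul_charlierWeight j ?_
  have hsum := hasSum_sum (s := antidiagonal n) fun p _ =>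
    (hasSum_charlierFn_mul_charlierWeight a p.2).mul_left (j.choose p.1 : ℝ)
  have hfun : (fun s : ℕ => charlierFn a n ↑(s + j) * charlierWeight a s) = fun s : ℕ =>
      ∑ p ∈ antidiagonal n, (j.choose p.1 : ℝ) * (charlierFn a p.2 s * charlierWeight a s) := by
    funext s
    rw [Nat.cast_add, charlierFn_add, sum_mul]
    simp_rw [Ring.choose_natCast, mul_assoc]
  have hval : ∑ p ∈ antidiagonal n, (j.choose p.1 : ℝ) * (if p.2 = 0 then Real.exp a else 0) =
      j.choose n * Real.exp a := by
    rw [sum_eq_single_of_mem (n, 0) (by simp)]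
    · simp
    · intro p hp hne
      have : p.2 ≠ 0 := fun h => hne (by ext <;> simp_all)
      simp [this]
  rwa [hfun, ← hval]

theorem charlier_orthogonality_general (a : ℝ) (m n : ℕ) (hmn : m ≠ n) :
    ∑' x : ℕ, charlierFn a m x * charlierFn a n x * a ^ x / (x.factorial : ℝ) = 0 := by
  wlog hlt : m < n generalizing m n
  · simpa only [mul_comm (charlierFn a m _)] using this n m hmn.symm (by omega)
  have hsum := hasSum_sum (s := antidiagonal m) fun p _ =>
    (hasSum_choose_mul_charlierFn_mul_charlierWeight a p.1 n).mul_left ((-a) ^ p.2 / p.2.factorial)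
  have hzero : ∀ p ∈ antidiagonal m, (-a) ^ p.2 / p.2.factorial *
      (a ^ p.1 / p.1.factorial * (p.1.choose n * Real.exp a)) = 0 := fun p hp => by
    have hpm : p.1 + p.2 = m := mem_antidiagonal.mp hp
    rw [Nat.choose_eq_zero_of_lt (by omega : p.1 < n)]
    simp
  have hfun : (fun x : ℕ => charlierFn a m x * charlierFn a n x * a ^ x / (x.factorial : ℝ)) =
      fun x : ℕ => ∑ p ∈ antidiagonal m, (-a) ^ p.2 / p.2.factorial *
        ((x.choose p.1 : ℝ) * charlierFn a n x * charlierWeight a x) := by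
    funext x
    rw [charlierFn_eq_sum_antidiagonal, sum_mul, sum_mul, sum_div]
    refine sum_congr rfl fun p _ => ?_
    rw [Ring.choose_natCast, charlierWeight]
    ring
  rw [sum_eq_zero hzero, ← hfun] at hsum
  exact hsum.tsum_eq

theorem charlier_orthogonality (a : ℝ) (ha : 0 < a) (m n : ℕ) (hmn : m ≠ n) :
    ∑' x : ℕ, charlierFn a m x * charlierFn a n x * a ^ x / (x.factorial : ℝ) = 0 :=
  charlier_orthogonality_general a m n hmn
end

section
/- For a finite set F = {f_1 < ... < f_k} of positive integers and n in σ_F = {u_F, u_F+1, ...} \ {u_F + f : f ∈ F}, where u_F = Σ_{f∈F} f - binom(k+1,2), the exceptional Charlier polynomial c_n^{a;F}(x), defined as the (k+1)×(k+1) determinant whose first row is (c_{n-u_F}^a(x), c_{n-u_F}^a(x+1), ..., c_{n-u_F}^a(x+k)) and whose remaining rows are (c_f^a(x), c_f^a(x+1), ..., c_f^a(x+k)) for f ∈ F, is a polynomial of degree exactly n. -/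
open Polynomial

/-- The Charlier polynomial `c_n^a` as a polynomial in `x`. -/
noncomputable def charlierP (a : ℝ) (n : ℕ) : Polynomial ℝ :=
  (n.factorial : ℝ)⁻¹ •
    ∑ j ∈ Finset.range (n + 1),
      ((-a) ^ (n - j) * (n.choose j : ℝ)) • ∏ i ∈ Finset.range j, (X - C (i : ℝ))

/-- The Charlier polynomial with a (possibly negative) integer index; zero for negative index. -/
noncomputable def charlierZ (a : ℝ) (m : ℤ) : Polynomial ℝ :=
  if m < 0 then 0 else charlierP a m.toNat

/-- `u_F = ∑_{f ∈ F} f - binom(k+1,2)`. -/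
def uF (F : Finset ℕ) : ℤ :=
  (∑ f ∈ F, (f : ℤ)) - ((F.card + 1).choose 2 : ℤ)

/-- The exceptional Charlier polynomial `c_n^{a;F}`: the `(k+1)×(k+1)` determinant with first
row `(c_{n-u_F}^a(x+j))_{j=0}^k` and remaining rows `(c_f^a(x+j))_{j=0}^k` for `f ∈ F`. -/
noncomputable def excCharlier (a : ℝ) (F : Finset ℕ) (n : ℤ) : Polynomial ℝ :=
  Matrix.det (Matrix.of (fun i j : Fin (F.card + 1) =>
    Fin.cases
      ((charlierZ a (n - uF F)).comp (X + C (j : ℝ)))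
      (fun i' : Fin F.card =>
        (charlierP a (F.orderIsoOfFin rfl i' : ℕ)).comp (X + C (j : ℝ)))
      i))

/-!
Write `Δ p = p(x+1) - p(x)`. Since `p(x+j) = ∑ₛ (j choose s) Δˢp(x)`, the determinant of
`(p_i(x+j))` equals that of `(Δʲ p_i)`, and `Δʲ p_i` has degree `d_i - j` with leading coefficient
`d_i (d_i - 1) ⋯ (d_i - j + 1) · lc(p_i)`. After scaling column `j` by `X^j`, row `i` has degree
at most `d_i`, and the coefficient of `X^{∑ d_i}` in the determinant is
`∏ lc(p_i) · det (d_i.descFactorial j)`, a Vandermonde determinant in the distinct `d_i`.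
Hence the determinant has degree `∑ d_i - ∑ j`; for the exceptional Charlier polynomial
`d = (n - u_F, f_1, …, f_k)`, distinct because `n ∉ u_F + F`, so that degree is
`n - u_F + ∑ f - binom(k+1, 2) = n`.
-/

namespace Polynomial

open Matrix

section CommSemiring

variable {R : Type*} [CommSemiring R]

theorem coeff_prod_sum_of_natDegree_le {ι : Type*} (s : Finset ι) (f : ι → R[X]) (d : ι → ℕ)
    (h : ∀ i ∈ s, (f i).natDegree ≤ d i) :
    (∏ i ∈ s, f i).coeff (∑ i ∈ s, d i) = ∏ i ∈ s, (f i).coeff (d i) := by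
  classical
  induction s using Finset.induction_on with
  | empty => simp
  | insert x s hx ih =>
    have hs : ∀ i ∈ s, (f i).natDegree ≤ d i := fun i hi => h i (Finset.mem_insert_of_mem hi)
    rw [Finset.prod_insert hx, Finset.sum_insert hx, Finset.prod_insert hx,
      coeff_mul_add_eq_of_natDegree_le (h x (Finset.mem_insert_self x s))
        ((natDegree_prod_le s f).trans (Finset.sum_le_sum hs)), ih hs]

end CommSemiring

section CommRing

variable {R : Type*} [CommRing R]

theorem natDegree_det_le_sum_of_natDegree_le {n : Type*} [Fintype n] [DecidableEq n]
    (M : Matrix n n R[X]) (d : n → ℕ) (h : ∀ i j, (M i j).natDegree ≤ d i) :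
    M.det.natDegree ≤ ∑ i, d i := by
  rw [← det_transpose, det_apply']
  refine natDegree_sum_le_of_forall_le _ _ fun σ _ => ?_
  refine natDegree_mul_le.trans ?_
  rw [natDegree_intCast, zero_add]
  exact (natDegree_prod_le _ _).trans (Finset.sum_le_sum fun i _ => h i (σ i))

theorem coeff_det_sum_of_natDegree_le {n : Type*} [Fintype n] [DecidableEq n]
    (M : Matrix n n R[X]) (d : n → ℕ) (h : ∀ i j, (M i j).natDegree ≤ d i) :
    M.det.coeff (∑ i, d i) = (of fun i j => (M i j).coeff (d i)).det := by
  rw [← det_transpose, det_apply', ← det_transpose, det_apply', finsetSum_coeff]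
  refine Finset.sum_congr rfl fun σ _ => ?_
  rw [coeff_intCast_mul]
  exact congrArg _ (coeff_prod_sum_of_natDegree_le _ _ _ fun i _ => h i (σ i))

theorem natDegree_prod_X_sub_natCast [Nontrivial R] (j : ℕ) :
    (∏ i ∈ Finset.range j, (X - C (i : R))).natDegree = j := by
  rw [natDegree_prod_of_monic _ _ fun i _ => monic_X_sub_C _]
  simp only [natDegree_X_sub_C, Finset.sum_const, Finset.card_range, smul_eq_mul, mul_one]

variable (R) in
noncomputable def forwardDiff : Module.End R R[X] := taylor 1 - 1

theorem forwardDiff_apply (p : R[X]) : forwardDiff R p = taylor 1 p - p := rfl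

theorem taylor_natCast_eq_sum_forwardDiff_pow (j : ℕ) (p : R[X]) :
    taylor (j : R) p = ∑ s ∈ Finset.range (j + 1), j.choose s • (forwardDiff R ^ s) p := by
  have htaylor : taylor (j : R) = taylor 1 ^ j := by
    induction j with
    | zero => rw [Nat.cast_zero, taylor_zero', pow_zero]; rfl
    | succ j ih =>
      refine LinearMap.ext fun q => ?_
      rw [pow_succ', Module.End.mul_apply, ← ih, taylor_taylor, Nat.cast_succ, add_comm]
  have hshift : taylor (1 : R) = forwardDiff R + 1 := (sub_add_cancel _ _).symm
  rw [htaylor, hshift, (Commute.one_right _).add_pow, LinearMap.sum_apply]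
  refine Finset.sum_congr rfl fun s _ => ?_
  rw [one_pow, mul_one, Module.End.mul_apply, Module.End.natCast_apply, map_nsmul]

theorem coeff_forwardDiff_of_natDegree_le {q : R[X]} {m : ℕ} (hq : q.natDegree ≤ m + 1) :
    (forwardDiff R q).coeff m = (m + 1) * q.coeff (m + 1) := by
  have hderiv : (hasseDeriv m q).natDegree < 2 :=
    (natDegree_hasseDeriv_le q m).trans_lt (by omega)
  rw [forwardDiff_apply, coeff_sub, taylor_coeff, eval_eq_sum_range' hderiv,
    Finset.sum_range_succ, Finset.sum_range_one, hasseDeriv_coeff, hasseDeriv_coeff,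
    zero_add, Nat.choose_self, add_comm 1 m, Nat.choose_succ_self_right]
  push_cast
  ring

theorem natDegree_forwardDiff_le {q : R[X]} {e : ℕ} (hq : q.natDegree ≤ e) :
    (forwardDiff R q).natDegree ≤ e - 1 := by
  refine natDegree_le_iff_coeff_eq_zero.mpr fun N hN => ?_
  rw [coeff_forwardDiff_of_natDegree_le (by omega), coeff_eq_zero_of_natDegree_lt (by omega),
    mul_zero]

theorem coeff_forwardDiff_sub_one {q : R[X]} {e : ℕ} (hq : q.natDegree ≤ e) :
    (forwardDiff R q).coeff (e - 1) = e * q.coeff e := by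
  cases e with
  | zero =>
    rw [coeff_forwardDiff_of_natDegree_le (by omega), coeff_eq_zero_of_natDegree_lt (by omega)]
    simp
  | succ e => simpa using coeff_forwardDiff_of_natDegree_le hq

variable {p : R[X]} {d : ℕ}

theorem natDegree_forwardDiff_pow_le (hp : p.natDegree ≤ d) (j : ℕ) :
    ((forwardDiff R ^ j) p).natDegree ≤ d - j := by
  induction j with
  | zero => simpa using hp
  | succ j ih =>
    rw [pow_succ', Module.End.mul_apply]
    exact (natDegree_forwardDiff_le ih).trans (by omega)

theorem coeff_forwardDiff_pow (hp : p.natDegree ≤ d) (j : ℕ) :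
    ((forwardDiff R ^ j) p).coeff (d - j) = d.descFactorial j * p.coeff d := by
  induction j with
  | zero => simp
  | succ j ih =>
    rw [pow_succ', Module.End.mul_apply, show d - (j + 1) = d - j - 1 by omega,
      coeff_forwardDiff_sub_one (natDegree_forwardDiff_pow_le hp j), ih, Nat.descFactorial_succ,
      Nat.cast_mul, mul_assoc]

theorem forwardDiff_pow_eq_zero_of_natDegree_lt {j : ℕ} (hp : p.natDegree < j) :
    (forwardDiff R ^ j) p = 0 := by
  have hdeg := natDegree_forwardDiff_pow_le (le_refl p.natDegree) j
  have hcoeff := coeff_forwardDiff_pow (le_refl p.natDegree) j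
  rw [Nat.descFactorial_eq_zero_iff_lt.mpr hp, Nat.cast_zero, zero_mul] at hcoeff
  rw [eq_C_of_natDegree_le_zero (p := (forwardDiff R ^ j) p) (by omega),
    ← Nat.sub_eq_zero_of_le hp.le, hcoeff, C_0]

theorem natDegree_X_pow_mul_forwardDiff_pow_le (hp : p.natDegree ≤ d) (j : ℕ) :
    (X ^ j * (forwardDiff R ^ j) p).natDegree ≤ d := by
  rcases le_or_gt j d with hj | hj
  · calc (X ^ j * (forwardDiff R ^ j) p).natDegree
          ≤ (X ^ j : R[X]).natDegree + ((forwardDiff R ^ j) p).natDegree := natDegree_mul_le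
      _ ≤ j + (d - j) := add_le_add (natDegree_X_pow_le j) (natDegree_forwardDiff_pow_le hp j)
      _ = d := by omega
  · rw [forwardDiff_pow_eq_zero_of_natDegree_lt (hp.trans_lt hj), mul_zero, natDegree_zero]
    exact Nat.zero_le d

theorem coeff_X_pow_mul_forwardDiff_pow (hp : p.natDegree ≤ d) (j : ℕ) :
    (X ^ j * (forwardDiff R ^ j) p).coeff d = d.descFactorial j * p.coeff d := by
  rw [coeff_X_pow_mul']
  split_ifs with hj
  · exact coeff_forwardDiff_pow hp j
  · rw [Nat.descFactorial_eq_zero_iff_lt.mpr (by omega), Nat.cast_zero, zero_mul]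

variable {m : ℕ}

noncomputable def casoratian (p : Fin m → R[X]) : R[X] :=
  (of fun i j : Fin m => (p i).comp (X + C ((j : ℕ) : R))).det

theorem casoratian_eq_det_forwardDiff_pow (p : Fin m → R[X]) :
    casoratian p = (of fun i j : Fin m => (forwardDiff R ^ (j : ℕ)) (p i)).det := by
  let T : Matrix (Fin m) (Fin m) R[X] := of fun s j => C ((j : ℕ).choose s : R)
  have hT : T.det = 1 := by
    rw [det_of_isUpperTriangular fun s j hjs => by
      show C _ = 0
      rw [Nat.choose_eq_zero_of_lt (show (j : ℕ) < s from hjs), Nat.cast_zero, C_0]]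
    simp [T]
  rw [casoratian, ← mul_one (det (of fun i j : Fin m => (forwardDiff R ^ (j : ℕ)) (p i))), ← hT,
    ← det_mul]
  congr 1
  ext1 i j
  have hrange : Finset.range ((j : ℕ) + 1) ⊆ Finset.range m :=
    Finset.range_subset_range.mpr j.isLt
  rw [of_apply, mul_apply, ← taylor_apply, taylor_natCast_eq_sum_forwardDiff_pow,
    Finset.sum_subset hrange fun s _ hs => by
      rw [Nat.choose_eq_zero_of_lt (by simpa using hs), zero_smul],
    ← Fin.sum_univ_eq_sum_range (fun s => (j : ℕ).choose s • (forwardDiff R ^ s) (p i))]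
  refine Finset.sum_congr rfl fun s _ => ?_
  rw [← Nat.cast_smul_eq_nsmul R, smul_eq_C_mul, mul_comm]
  rfl

theorem X_pow_mul_casoratian (p : Fin m → R[X]) :
    X ^ (∑ j : Fin m, (j : ℕ)) * casoratian p =
      (of fun i j : Fin m => X ^ (j : ℕ) * (forwardDiff R ^ (j : ℕ)) (p i)).det := by
  rw [casoratian_eq_det_forwardDiff_pow, ← Finset.prod_pow_eq_pow_sum, ← det_mul_row]
  rfl

theorem natDegree_X_pow_mul_casoratian_le (p : Fin m → R[X]) :
    (X ^ (∑ j : Fin m, (j : ℕ)) * casoratian p).natDegree ≤ ∑ i, (p i).natDegree := by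
  rw [X_pow_mul_casoratian]
  exact natDegree_det_le_sum_of_natDegree_le _ _ fun i j =>
    natDegree_X_pow_mul_forwardDiff_pow_le le_rfl j

theorem coeff_X_pow_mul_casoratian (p : Fin m → R[X]) :
    (X ^ (∑ j : Fin m, (j : ℕ)) * casoratian p).coeff (∑ i, (p i).natDegree) =
      (∏ i, (p i).leadingCoeff) *
        (of fun i j : Fin m => ((p i).natDegree.descFactorial j : R)).det := by
  rw [X_pow_mul_casoratian, coeff_det_sum_of_natDegree_le
    (of fun i j : Fin m => X ^ (j : ℕ) * (forwardDiff R ^ (j : ℕ)) (p i)) _ fun i j =>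
    natDegree_X_pow_mul_forwardDiff_pow_le le_rfl j, ← det_mul_column]
  congr 1
  ext1 i j
  rw [of_apply, of_apply, coeff_X_pow_mul_forwardDiff_pow le_rfl, mul_comm]
  rfl

end CommRing

section CharZero

variable {R : Type*} [CommRing R] [IsDomain R] [CharZero R] {m : ℕ}

theorem det_descFactorial_ne_zero {d : Fin m → ℕ} (hd : Function.Injective d) :
    (of fun i j : Fin m => ((d i).descFactorial j : R)).det ≠ 0 := by
  have hvandermonde : (of fun i j : Fin m => ((d i).descFactorial j : R)).det =
      (vandermonde fun i => (d i : R)).det := by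
    rw [det_eval_matrixOfPolynomials_eq_det_vandermonde _ (fun j => descPochhammer R j)
      (fun j => descPochhammer_natDegree R j) (fun j => monic_descPochhammer R j)]
    simp only [descPochhammer_eval_eq_descFactorial]
  rw [hvandermonde, det_vandermonde_ne_zero_iff]
  exact fun i j hij => hd (Nat.cast_injective hij)

variable {p : Fin m → R[X]}

theorem coeff_X_pow_mul_casoratian_ne_zero (hp : ∀ i, p i ≠ 0)
    (hd : Function.Injective fun i => (p i).natDegree) :
    (X ^ (∑ j : Fin m, (j : ℕ)) * casoratian p).coeff (∑ i, (p i).natDegree) ≠ 0 := by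
  rw [coeff_X_pow_mul_casoratian]
  exact mul_ne_zero (Finset.prod_ne_zero_iff.mpr fun i _ => leadingCoeff_ne_zero.mpr (hp i))
    (det_descFactorial_ne_zero hd)

theorem casoratian_ne_zero (hp : ∀ i, p i ≠ 0)
    (hd : Function.Injective fun i => (p i).natDegree) : casoratian p ≠ 0 := fun h => by
  simpa [h] using coeff_X_pow_mul_casoratian_ne_zero hp hd

theorem natDegree_casoratian_add_sum (hp : ∀ i, p i ≠ 0)
    (hd : Function.Injective fun i => (p i).natDegree) :
    (casoratian p).natDegree + ∑ j : Fin m, (j : ℕ) = ∑ i, (p i).natDegree := by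
  rw [← natDegree_X_pow_mul _ (casoratian_ne_zero hp hd)]
  exact natDegree_eq_of_le_of_coeff_ne_zero (natDegree_X_pow_mul_casoratian_le p)
    (coeff_X_pow_mul_casoratian_ne_zero hp hd)

end CharZero

end Polynomial

theorem Finset.sum_orderIsoOfFin {α M : Type*} [LinearOrder α] [AddCommMonoid M] (s : Finset α)
    {k : ℕ} (h : s.card = k) (f : α → M) :
    ∑ i, f (s.orderIsoOfFin h i) = ∑ x ∈ s, f x :=
  (Equiv.sum_comp (s.orderIsoOfFin h).toEquiv fun x => f x).trans (Finset.sum_coe_sort s f)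

theorem Fin.sum_val_eq_choose_two (k : ℕ) : ∑ i : Fin k, (i : ℕ) = k.choose 2 := by
  rw [Fin.sum_univ_eq_sum_range (fun i => i), Finset.sum_range_id, Nat.choose_two_right]

theorem natDegree_charlierP_le (a : ℝ) (n : ℕ) : (charlierP a n).natDegree ≤ n := by
  refine (natDegree_smul_le _ _).trans (natDegree_sum_le_of_forall_le _ _ fun j hj => ?_)
  refine (natDegree_smul_le _ _).trans ?_
  rw [natDegree_prod_X_sub_natCast]
  exact Finset.mem_range_succ_iff.mp hj

theorem coeff_charlierP_self (a : ℝ) (n : ℕ) : (charlierP a n).coeff n = (n.factorial : ℝ)⁻¹ := by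
  rw [charlierP, coeff_smul, finsetSum_coeff, Finset.sum_eq_single_of_mem n
    (Finset.self_mem_range_succ n) fun j hj hjn => by
      rw [coeff_smul, coeff_eq_zero_of_natDegree_lt, smul_zero]
      rw [natDegree_prod_X_sub_natCast]
      exact (Finset.mem_range_succ_iff.mp hj).lt_of_ne hjn]
  have hmonic := (monic_prod_of_monic (Finset.range n) (fun i : ℕ => X - C (i : ℝ))
    fun i _ => monic_X_sub_C _).coeff_natDegree
  rw [natDegree_prod_X_sub_natCast] at hmonic
  rw [coeff_smul, hmonic]
  simp

theorem natDegree_charlierP (a : ℝ) (n : ℕ) : (charlierP a n).natDegree = n :=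
  natDegree_eq_of_le_of_coeff_ne_zero (natDegree_charlierP_le a n)
    (by rw [coeff_charlierP_self]; positivity)

theorem charlierP_ne_zero (a : ℝ) (n : ℕ) : charlierP a n ≠ 0 :=
  ne_of_apply_ne (coeff · n) (by rw [coeff_charlierP_self, coeff_zero]; positivity)

theorem excCharlier_eq_casoratian (a : ℝ) (F : Finset ℕ) (n : ℤ) (d : Fin (F.card + 1) → ℕ)
    (hd₀ : (d 0 : ℤ) = n - uF F) (hd : ∀ i, d i.succ = F.orderIsoOfFin rfl i) :
    excCharlier a F n = casoratian fun i => charlierP a (d i) := by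
  rw [excCharlier, casoratian]
  congr 1
  ext1 i j
  refine Fin.cases ?_ (fun i => ?_) i
  · simp only [Matrix.of_apply, Fin.cases_zero, charlierZ, ← hd₀, Int.toNat_natCast]
    rw [if_neg (Int.natCast_nonneg _).not_gt]
  · simp [hd]

theorem excCharlier_degree_general (a : ℝ) (F : Finset ℕ) (n : ℕ)
    (hn1 : uF F ≤ (n : ℤ)) (hn2 : ∀ f ∈ F, (n : ℤ) ≠ uF F + f) :
    (excCharlier a F n).natDegree = n ∧ excCharlier a F n ≠ 0 := by
  obtain ⟨t, ht⟩ : ∃ t : ℕ, (t : ℤ) = n - uF F := ⟨_, Int.toNat_of_nonneg (by omega)⟩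
  set d : Fin (F.card + 1) → ℕ := Fin.cons t fun i => F.orderIsoOfFin rfl i
  have hp : ∀ i, charlierP a (d i) ≠ 0 := fun i => charlierP_ne_zero a _
  have hd : Function.Injective fun i => (charlierP a (d i)).natDegree := by
    simp only [natDegree_charlierP]
    refine Fin.cons_injective_iff.mpr
      ⟨?_, Subtype.val_injective.comp (F.orderIsoOfFin rfl).injective⟩
    rintro ⟨i, hi⟩
    exact hn2 _ (F.orderIsoOfFin rfl i).2 (by dsimp only at hi; omega)
  have hsum : ∑ i, d i = n + (F.card + 1).choose 2 := by
    rw [Fin.sum_cons, Finset.sum_orderIsoOfFin F rfl fun x => x]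
    simp only [uF] at ht
    zify
    omega
  have hdegree := natDegree_casoratian_add_sum hp hd
  simp only [natDegree_charlierP, Fin.sum_val_eq_choose_two] at hdegree
  rw [excCharlier_eq_casoratian a F n d ht fun i => rfl]
  exact ⟨by omega, casoratian_ne_zero hp hd⟩

theorem excCharlier_degree (a : ℝ) (ha : a ≠ 0) (F : Finset ℕ) (hFne : F.Nonempty)
    (hFpos : ∀ f ∈ F, 0 < f) (n : ℕ)
    (hn1 : uF F ≤ (n : ℤ)) (hn2 : ∀ f ∈ F, (n : ℤ) ≠ uF F + f) :
    (excCharlier a F n).natDegree = n ∧ excCharlier a F n ≠ 0 :=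
  excCharlier_degree_general a F n hn1 hn2
end

section
/- For F = {1,2}, the exceptional Charlier polynomials c_n^{a;F} satisfy for all n ≥ 0 and all real x the seven-term recurrence relation Σ_{j=-3}^{3} A_j(n) c_{n+j}^{a;F}(x) = λ(x) c_n^{a;F}(x), where A_{-3}(n)=a^3/6, A_{-2}(n)=a^2(n/2-1), A_{-1}(n)=(n-1)(a^2+(n-2)a)/2, A_0(n)=n^3/6+n^2(a-1/2)+n(1/3-2a), A_1(n)=(n+1)(n-2)(a+n-1)/2, A_2(n)=(n-1)(n^2-4)/2, A_3(n)=(n+3)(n-1)(n-2)/6, and λ(x)=x^3/6+(1-a)x^2/2+(2-3a+3a^2)x/6-a^3/6. -/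
/-- Charlier polynomial with integer index; zero for negative index. -/
noncomputable def charlierFnZ (a : ℝ) (m : ℤ) (x : ℝ) : ℝ :=
  if m < 0 then 0 else charlierFn a m.toNat x

/-- The exceptional Charlier polynomial `c_n^{a;F}` for `F = {1,2}` (so `u_F = 0`):
a `3×3` Casoratian-type determinant. -/
noncomputable def excC12 (a : ℝ) (m : ℤ) (x : ℝ) : ℝ :=
  Matrix.det !![charlierFnZ a m x, charlierFnZ a m (x + 1), charlierFnZ a m (x + 2);
                charlierFn a 1 x, charlierFn a 1 (x + 1), charlierFn a 1 (x + 2);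
                charlierFn a 2 x, charlierFn a 2 (x + 1), charlierFn a 2 (x + 2)]

open Polynomial

section FallingEval

variable {R : Type*} [CommRing R]

noncomputable def fallingEval (x : R) : R[X] →ₗ[R] R :=
  (basisMonomials R).constr R fun j => (descPochhammer R j).eval x

lemma fallingEval_monomial (x r : R) (j : ℕ) :
    fallingEval x (monomial j r) = r * (descPochhammer R j).eval x := by
  have : monomial j r = r • basisMonomials R j := by simp [coe_basisMonomials, smul_monomial]
  rw [this, map_smul, fallingEval, Module.Basis.constr_basis, smul_eq_mul]

lemma fallingEval_C_mul (x r : R) (p : R[X]) : fallingEval x (C r * p) = r * fallingEval x p := by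
  rw [C_mul', map_smul, smul_eq_mul]

lemma fallingEval_add_one_X_mul (x : R) (p : R[X]) :
    fallingEval (x + 1) (X * p) = (x + 1) * fallingEval x p := by
  induction p using Polynomial.induction_on' with
  | add p q hp hq => rw [mul_add, map_add, map_add, hp, hq, mul_add]
  | monomial j r =>
    rw [X_mul_monomial, fallingEval_monomial, fallingEval_monomial, descPochhammer_succ_left]
    simp only [eval_mul, eval_X, eval_comp, eval_sub, eval_one, add_sub_cancel_right]
    ring

lemma fallingEval_add_one (x : R) (p : R[X]) :
    fallingEval (x + 1) p = fallingEval x p + fallingEval x (derivative p) := by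
  induction p using Polynomial.induction_on' with
  | add p q hp hq => simp only [map_add, hp, hq]; abel
  | monomial j r =>
    rw [derivative_monomial, fallingEval_monomial, fallingEval_monomial, fallingEval_monomial]
    cases j with
    | zero => simp
    | succ j =>
      have h := congrArg (eval (x + 1)) (descPochhammer_succ_comp_X_sub_one R j)
      simp only [smul_eq_mul, eval_mul, eval_add, eval_natCast, eval_one, eval_comp, eval_sub,
        eval_X, add_sub_cancel_right] at h
      rw [add_tsub_cancel_right, h]
      push_cast
      ring

end FallingEval

open scoped Nat in
lemma charlierFn_eq_fallingEval (a : ℝ) (n : ℕ) (x : ℝ) :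
    charlierFn a n x = (n ! : ℝ)⁻¹ * fallingEval x ((X - C a) ^ n) := by
  rw [charlierFn, sub_eq_add_neg, ← C_neg, add_pow, map_sum]
  congr 1
  refine Finset.sum_congr rfl fun j _ => ?_
  rw [show X ^ j * C (-a) ^ (n - j) * (n.choose j : ℝ[X])
      = monomial j ((-a) ^ (n - j) * n.choose j) by
    rw [← C_pow, ← C_eq_natCast, mul_assoc, ← C_mul, mul_comm, C_mul_X_pow_eq_monomial],
    fallingEval_monomial, descPochhammer_eval_eq_prod_range]

lemma charlierFn_zero (a x : ℝ) : charlierFn a 0 x = 1 := by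
  simp [charlierFn]

lemma charlierFn_one (a x : ℝ) : charlierFn a 1 x = x - a := by
  simp only [charlierFn, Finset.sum_range_succ, Finset.prod_range_succ, Finset.sum_range_zero,
    Finset.prod_range_zero]
  norm_num [Nat.choose]
  ring

lemma charlierFn_two (a x : ℝ) : charlierFn a 2 x = (x ^ 2 - (2 * a + 1) * x + a ^ 2) / 2 := by
  simp only [charlierFn, Finset.sum_range_succ, Finset.prod_range_succ, Finset.sum_range_zero,
    Finset.prod_range_zero]
  norm_num [Nat.choose, Nat.factorial]
  ring

lemma charlierFn_succ_add_one (a x : ℝ) (n : ℕ) :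
    charlierFn a (n + 1) (x + 1) = charlierFn a (n + 1) x + charlierFn a n x := by
  simp only [charlierFn_eq_fallingEval, fallingEval_add_one, derivative_X_sub_C_pow,
    fallingEval_C_mul, add_tsub_cancel_right, Nat.factorial_succ]
  push_cast
  field_simp

lemma charlierFn_succ_add_one_mul (a x : ℝ) (n : ℕ) :
    (n + 1) * charlierFn a (n + 1) (x + 1)
      = (x + 1) * charlierFn a n x - a * charlierFn a n (x + 1) := by
  simp only [charlierFn_eq_fallingEval]
  rw [pow_succ', sub_mul, map_sub, fallingEval_add_one_X_mul, fallingEval_C_mul, Nat.factorial_succ]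
  push_cast
  field_simp

lemma charlierFnZ_of_neg (a : ℝ) {m : ℤ} (hm : m < 0) (x : ℝ) : charlierFnZ a m x = 0 := by
  simp [charlierFnZ, hm]

lemma charlierFnZ_add_one (a : ℝ) (m : ℤ) (x : ℝ) :
    charlierFnZ a m (x + 1) = charlierFnZ a m x + charlierFnZ a (m - 1) x := by
  rcases m with (_ | n) | n
  · simp [charlierFnZ, charlierFn_zero]
  · simpa [charlierFnZ, show ¬(n : ℤ) + 1 < 0 by omega, show ¬(n : ℤ) < 0 by omega]
      using charlierFn_succ_add_one a x n
  · simp [charlierFnZ_of_neg, Int.negSucc_lt_zero]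

lemma charlierFnZ_add_one_mul (a : ℝ) (m : ℤ) (x : ℝ) :
    (m + 1) * charlierFnZ a (m + 1) (x + 1)
      = (x + 1) * charlierFnZ a m x - a * charlierFnZ a m (x + 1) := by
  rcases m with n | (_ | n)
  · simpa [charlierFnZ, show ¬(n : ℤ) + 1 < 0 by omega, show ¬(n : ℤ) < 0 by omega]
      using charlierFn_succ_add_one_mul a x n
  · simp [charlierFnZ_of_neg]
  · simp [charlierFnZ_of_neg, Int.negSucc_lt_zero, show Int.negSucc (n + 1) + 1 < 0 by omega]

def IsCharlierSolution (a x : ℝ) (c : ℤ → ℝ) : Prop :=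
  ∀ m : ℤ, x * c m = (m + 1) * c (m + 1) + (m + a) * c m + a * c (m - 1)

lemma isCharlierSolution_charlierFnZ (a x : ℝ) :
    IsCharlierSolution a x fun m => charlierFnZ a m x := by
  intro m
  have hΔ₁ := charlierFnZ_add_one a (m + 1) x
  rw [add_sub_cancel_right] at hΔ₁
  linear_combination (m + 1 : ℝ) * hΔ₁ + a * charlierFnZ_add_one a m x
    - charlierFnZ_add_one_mul a m x

/-- The Casoratian `excC12` after the column operations `C₂ - C₁` and `C₃ - 2 C₂ + C₁`, which
turn `c_k(x + j)` into `c_{k-j}(x)`: here `x - a = c₁(x)` and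
`(x ^ 2 - (2 a - 1) x + a ^ 2) / 2 = c₁(x) ^ 2 - c₂(x)`. -/
noncomputable def exceptionalSeq (a x : ℝ) (c : ℤ → ℝ) (m : ℤ) : ℝ :=
  c m - (x - a) * c (m - 1) + (x ^ 2 - (2 * a - 1) * x + a ^ 2) / 2 * c (m - 2)

lemma excC12_eq_exceptionalSeq (a : ℝ) (m : ℤ) (x : ℝ) :
    excC12 a m x = exceptionalSeq a x (fun k => charlierFnZ a k x) m := by
  have hΔ₂ : charlierFnZ a m (x + 2)
      = charlierFnZ a m x + 2 * charlierFnZ a (m - 1) x + charlierFnZ a (m - 2) x := by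
    rw [show x + 2 = x + 1 + 1 by ring, charlierFnZ_add_one, charlierFnZ_add_one,
      charlierFnZ_add_one a (m - 1), sub_sub, one_add_one_eq_two]
    ring
  rw [excC12, Matrix.det_fin_three]
  simp only [Matrix.of_apply, Matrix.cons_val', Matrix.cons_val_zero, Matrix.cons_val_one,
    Matrix.cons_val_two, Matrix.head_cons, Matrix.tail_cons, Matrix.empty_val',
    Matrix.cons_val_fin_one, Matrix.head_fin_const]
  rw [hΔ₂, charlierFnZ_add_one, charlierFn_one, charlierFn_one, charlierFn_one, charlierFn_two,
    charlierFn_two, charlierFn_two, exceptionalSeq]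
  ring

namespace IsCharlierSolution

variable {a x : ℝ} {c : ℤ → ℝ}

lemma exceptionalSeq_eq (hc : IsCharlierSolution a x c) (m : ℤ) :
    exceptionalSeq a x c m
      = (m - 1) * (m - 2) / 2 * c m + (m - 1) * (m - 2) * c (m - 1)
        + (m - 2) * (m - 1 + 2 * a) / 2 * c (m - 2) + a * (m - 2) * c (m - 3)
        + a ^ 2 / 2 * c (m - 4) := by
  rw [exceptionalSeq]
  linear_combination (norm := (push_cast; ring_nf))
    (m - 3) / 2 * hc (m - 1) + (x + m - 1 - a) / 2 * hc (m - 2) + a / 2 * hc (m - 3)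

lemma lambda_mul (hc : IsCharlierSolution a x c) (m : ℤ) :
    (x ^ 3 / 6 + (1 - a) * x ^ 2 / 2 + (2 - 3 * a + 3 * a ^ 2) * x / 6 - a ^ 3 / 6) * c m
      = (m + 1) * (m + 2) * (m + 3) / 6 * c (m + 3) + (m + 1) * (m + 2) ^ 2 / 2 * c (m + 2)
        + (m + 1) * (m + 2) * (m + 1 + a) / 2 * c (m + 1)
        + (m * (m + 1) * (m + 2) / 6 + a * (m + 1) ^ 2) * c m
        + a * (m + 1) * (m + a) / 2 * c (m - 1) + a ^ 2 * m / 2 * c (m - 2)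
        + a ^ 3 / 6 * c (m - 3) := by
  linear_combination (norm := (push_cast; ring_nf))
    (m + 1) * (m + 2) / 6 * hc (m + 2) + (m + 1) * (2 * m + 4 + x - a) / 6 * hc (m + 1)
    + (x ^ 2 + (m + 3 - 2 * a) * x + m ^ 2 + 3 * m + 2 + a * (m + 1) + a ^ 2) / 6 * hc m
    + a * (2 * m + 2 + x - a) / 6 * hc (m - 1) + a ^ 2 / 6 * hc (m - 2)

lemma seven_term_recurrence (hc : IsCharlierSolution a x c) (n : ℤ) :
    a ^ 3 / 6 * exceptionalSeq a x c (n - 3)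
      + a ^ 2 * ((n : ℝ) / 2 - 1) * exceptionalSeq a x c (n - 2)
      + ((n : ℝ) - 1) * (a ^ 2 + ((n : ℝ) - 2) * a) / 2 * exceptionalSeq a x c (n - 1)
      + ((n : ℝ) ^ 3 / 6 + (n : ℝ) ^ 2 * (a - 1 / 2) + (n : ℝ) * (1 / 3 - 2 * a))
          * exceptionalSeq a x c n
      + ((n : ℝ) + 1) * ((n : ℝ) - 2) * (a + (n : ℝ) - 1) / 2 * exceptionalSeq a x c (n + 1)
      + ((n : ℝ) - 1) * ((n : ℝ) ^ 2 - 4) / 2 * exceptionalSeq a x c (n + 2)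
      + ((n : ℝ) + 3) * ((n : ℝ) - 1) * ((n : ℝ) - 2) / 6 * exceptionalSeq a x c (n + 3)
    = (x ^ 3 / 6 + (1 - a) * x ^ 2 / 2 + (2 - 3 * a + 3 * a ^ 2) * x / 6 - a ^ 3 / 6)
        * exceptionalSeq a x c n := by
  simp only [hc.exceptionalSeq_eq]
  symm
  linear_combination (norm := (push_cast; ring_nf))
    (n - 1) * (n - 2) / 2 * hc.lambda_mul n + (n - 1) * (n - 2) * hc.lambda_mul (n - 1)
    + (n - 2) * (n - 1 + 2 * a) / 2 * hc.lambda_mul (n - 2) + a * (n - 2) * hc.lambda_mul (n - 3)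
    + a ^ 2 / 2 * hc.lambda_mul (n - 4)

end IsCharlierSolution

theorem excCharlier_seven_term_recurrence_general (a : ℝ) (n : ℕ) (x : ℝ) :
    a ^ 3 / 6 * excC12 a ((n : ℤ) - 3) x
      + a ^ 2 * ((n : ℝ) / 2 - 1) * excC12 a ((n : ℤ) - 2) x
      + ((n : ℝ) - 1) * (a ^ 2 + ((n : ℝ) - 2) * a) / 2 * excC12 a ((n : ℤ) - 1) x
      + ((n : ℝ) ^ 3 / 6 + (n : ℝ) ^ 2 * (a - 1 / 2) + (n : ℝ) * (1 / 3 - 2 * a))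
          * excC12 a (n : ℤ) x
      + ((n : ℝ) + 1) * ((n : ℝ) - 2) * (a + (n : ℝ) - 1) / 2 * excC12 a ((n : ℤ) + 1) x
      + ((n : ℝ) - 1) * ((n : ℝ) ^ 2 - 4) / 2 * excC12 a ((n : ℤ) + 2) x
      + ((n : ℝ) + 3) * ((n : ℝ) - 1) * ((n : ℝ) - 2) / 6 * excC12 a ((n : ℤ) + 3) x
    = (x ^ 3 / 6 + (1 - a) * x ^ 2 / 2 + (2 - 3 * a + 3 * a ^ 2) * x / 6 - a ^ 3 / 6)
        * excC12 a (n : ℤ) x := by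
  simp only [excC12_eq_exceptionalSeq]
  simpa only [Int.cast_natCast] using (isCharlierSolution_charlierFnZ a x).seven_term_recurrence n

theorem excCharlier_seven_term_recurrence (a : ℝ) (ha : a ≠ 0) (n : ℕ) (x : ℝ) :
    a ^ 3 / 6 * excC12 a ((n : ℤ) - 3) x
      + a ^ 2 * ((n : ℝ) / 2 - 1) * excC12 a ((n : ℤ) - 2) x
      + ((n : ℝ) - 1) * (a ^ 2 + ((n : ℝ) - 2) * a) / 2 * excC12 a ((n : ℤ) - 1) x
      + ((n : ℝ) ^ 3 / 6 + (n : ℝ) ^ 2 * (a - 1 / 2) + (n : ℝ) * (1 / 3 - 2 * a))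
          * excC12 a (n : ℤ) x
      + ((n : ℝ) + 1) * ((n : ℝ) - 2) * (a + (n : ℝ) - 1) / 2 * excC12 a ((n : ℤ) + 1) x
      + ((n : ℝ) - 1) * ((n : ℝ) ^ 2 - 4) / 2 * excC12 a ((n : ℤ) + 2) x
      + ((n : ℝ) + 3) * ((n : ℝ) - 1) * ((n : ℝ) - 2) / 6 * excC12 a ((n : ℤ) + 3) x
    = (x ^ 3 / 6 + (1 - a) * x ^ 2 / 2 + (2 - 3 * a + 3 * a ^ 2) * x / 6 - a ^ 3 / 6)
        * excC12 a (n : ℤ) x :=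
  excCharlier_seven_term_recurrence_general a n x
end

section
/- For 0 < a < 1 and c > 0, the Meixner polynomials m_n^{a,c} are orthogonal with respect to the positive measure ρ_{a,c} = Σ_{x=0}^∞ (a^x Γ(x+c)/x!) δ_x: for m ≠ n, Σ_{x=0}^∞ m_m^{a,c}(x) m_n^{a,c}(x) a^x Γ(x+c)/x! = 0. -/
/-- The generalized binomial coefficient `binom(y, j) = y(y-1)⋯(y-j+1)/j!` for real `y`. -/
noncomputable def gbinom (y : ℝ) (j : ℕ) : ℝ :=
  (∏ i ∈ Finset.range j, (y - (i : ℝ))) / (j.factorial : ℝ)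

/-- The Meixner polynomial
`m_n^{a,c}(x) = (a/(1-a))^n ∑_{j=0}^n a^{-j} binom(x,j) binom(-x-c, n-j)`. -/
noncomputable def meixnerFn (a c : ℝ) (n : ℕ) (x : ℝ) : ℝ :=
  (a / (1 - a)) ^ n *
    ∑ j ∈ Finset.range (n + 1), a ^ (-(j : ℤ)) * gbinom x j * gbinom (-x - c) (n - j)

/-!
Write `ρ_β(x) = a^x Γ(x + β) / x!`. A Rodrigues-type formula shows that on `ℕ` the product
`m_n ρ_c` is a constant multiple of the `n`-th backward difference of `ρ_{c+n}` (extended by zero).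
Summing against a polynomial `Q` and shifting the summation index moves the difference onto `Q`:
`∑ Q m_n ρ_c = const · ∑ (Δⁿ Q) ρ_{c+n}`, which vanishes when `deg Q < n`. As `m_m` is a polynomial
of degree `≤ m`, this gives orthogonality. All series converge by the ratio test, since
`ρ_β(x + 1) / ρ_β(x) = a (x + β) / (x + 1) → a < 1`.
-/

open Polynomial Finset Filter Topology Asymptotics
open scoped Nat

lemma gbinom_eq_eval_descPochhammer (y : ℝ) (j : ℕ) :
    gbinom y j = (descPochhammer ℝ j).eval y / j ! := by
  rw [gbinom, descPochhammer_eval_eq_prod_range]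

lemma gbinom_natCast (x j : ℕ) : gbinom x j = x.choose j := by
  rw [gbinom_eq_eval_descPochhammer, Nat.cast_choose_eq_descPochhammer_div]

lemma Real.Gamma_add_nat_eq_mul_ascPochhammer {z : ℝ} (hz : ∀ k : ℕ, z ≠ -k) (n : ℕ) :
    Real.Gamma (z + n) = Real.Gamma z * (ascPochhammer ℝ n).eval z := by
  induction n with
  | zero => simp
  | succ n ih =>
    have hzn : z + n ≠ 0 := fun h => hz n (by linarith)
    rw [Nat.cast_succ, ← add_assoc, Real.Gamma_add_one hzn, ih, ascPochhammer_succ_eval]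
    ring

lemma gbinom_neg_mul_Gamma {z : ℝ} (hz : ∀ k : ℕ, z ≠ -k) (r : ℕ) :
    gbinom (-z) r * Real.Gamma z = (-1) ^ r * Real.Gamma (z + r) / r ! := by
  have hdesc : (descPochhammer ℝ r).eval (-z) = (-1) ^ r * (ascPochhammer ℝ r).eval z := by
    rw [← neg_neg z, ascPochhammer_eval_neg_eq_descPochhammer, neg_neg, ← mul_assoc,
      ← mul_pow, neg_one_mul, neg_neg, one_pow, one_mul]
  rw [gbinom_eq_eval_descPochhammer, hdesc, Real.Gamma_add_nat_eq_mul_ascPochhammer hz]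
  ring

noncomputable def meixnerPoly (a c : ℝ) (n : ℕ) : ℝ[X] :=
  C ((a / (1 - a)) ^ n) * ∑ j ∈ range (n + 1), C (a ^ (-(j : ℤ)) / (j ! * (n - j)!)) *
    descPochhammer ℝ j * (descPochhammer ℝ (n - j)).comp (-X - C c)

lemma meixnerFn_eq_eval (a c : ℝ) (n : ℕ) (x : ℝ) :
    meixnerFn a c n x = (meixnerPoly a c n).eval x := by
  simp only [meixnerFn, meixnerPoly, gbinom_eq_eval_descPochhammer, eval_mul, eval_C,
    eval_finsetSum, eval_comp, eval_sub, eval_neg, eval_X]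
  congr 1
  refine sum_congr rfl fun j _ => ?_
  ring

lemma natDegree_meixnerPoly_le (a c : ℝ) (n : ℕ) : (meixnerPoly a c n).natDegree ≤ n := by
  refine natDegree_C_mul_le _ _ |>.trans <| natDegree_sum_le_of_forall_le _ _ fun j hj => ?_
  have hjn : j ≤ n := Nat.lt_succ_iff.mp (mem_range.mp hj)
  have hlin : (-X - C c : ℝ[X]).natDegree = 1 := by
    rw [← neg_add', natDegree_neg, natDegree_X_add_C]
  calc _ ≤ (C (a ^ (-(j : ℤ)) / (j ! * (n - j)!)) * descPochhammer ℝ j).natDegree +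
        ((descPochhammer ℝ (n - j)).comp (-X - C c)).natDegree := natDegree_mul_le
    _ ≤ j + (n - j) := by
      gcongr
      · exact natDegree_C_mul_le _ _ |>.trans (descPochhammer_natDegree ℝ j).le
      · rw [natDegree_comp, hlin, mul_one, descPochhammer_natDegree]
    _ = n := Nat.add_sub_cancel' hjn

noncomputable def meixnerWeight (a β : ℝ) (y : ℕ) : ℝ :=
  a ^ y * Real.Gamma (y + β) / y !

lemma meixnerWeight_pos {a β : ℝ} (ha : 0 < a) (hβ : 0 < β) (y : ℕ) :
    0 < meixnerWeight a β y := by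
  have := Real.Gamma_pos_of_pos (by positivity : 0 < (y : ℝ) + β)
  unfold meixnerWeight
  positivity

lemma meixnerWeight_succ_div {a β : ℝ} (ha : a ≠ 0) (hβ : 0 < β) (y : ℕ) :
    meixnerWeight a β (y + 1) / meixnerWeight a β y = a * (y + β) / (y + 1) := by
  have hΓ : Real.Gamma (y + β) ≠ 0 := (Real.Gamma_pos_of_pos (by positivity)).ne'
  rw [meixnerWeight, meixnerWeight, Nat.cast_succ, add_right_comm,
    Real.Gamma_add_one (by positivity), Nat.factorial_succ, Nat.cast_mul, Nat.cast_succ]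
  field_simp
  ring

/-- The `if` extends the weight by zero to negative arguments, where `ℕ` subtraction would
truncate. -/
lemma meixnerFn_mul_meixnerWeight {a c : ℝ} (ha : a ≠ 0) (hc : ∀ k : ℕ, c ≠ -k) (n x : ℕ) :
    meixnerFn a c n x * meixnerWeight a c x =
      (a / (1 - a)) ^ n / n ! * ∑ j ∈ range (n + 1), (-1) ^ (n - j) * (n.choose j : ℝ) *
        if j ≤ x then meixnerWeight a (c + n) (x - j) else 0 := by
  rw [meixnerFn, mul_assoc, div_mul_eq_mul_div _ (n ! : ℝ), mul_div_assoc, sum_mul, sum_div]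
  congr 1
  refine sum_congr rfl fun j hj => ?_
  have hjn : j ≤ n := Nat.lt_succ_iff.mp (mem_range.mp hj)
  split_ifs with hjx
  · have hxc : ∀ k : ℕ, (x : ℝ) + c ≠ -k := fun k h =>
      hc (x + k) (by push_cast; linarith)
    have hG := gbinom_neg_mul_Gamma hxc (n - j)
    rw [neg_add'] at hG
    have hpow : a ^ (-(j : ℤ)) * a ^ x = a ^ (x - j) := by
      rw [zpow_neg, zpow_natCast, pow_sub₀ a ha hjx, mul_comm]
    have harg : (x : ℝ) + c + (n - j : ℕ) = (x - j : ℕ) + (c + n) := by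
      push_cast [Nat.cast_sub hjn, Nat.cast_sub hjx]; ring
    rw [gbinom_natCast, Nat.cast_choose ℝ hjx, Nat.cast_choose ℝ hjn, meixnerWeight,
      meixnerWeight, ← hpow, ← harg]
    calc _ = a ^ (-(j : ℤ)) * a ^ x * (gbinom (-x - c) (n - j) * Real.Gamma (x + c)) /
          (j ! * (x - j)!) := by field_simp
      _ = _ := by rw [hG]; field_simp
  · rw [gbinom_natCast, Nat.choose_eq_zero_of_lt (not_le.mp hjx)]
    simp

lemma summable_eval_mul_of_tendsto_ratio {w : ℕ → ℝ} (hw : ∀ y, 0 < w y) {r : ℝ} (hr : r < 1)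
    (hratio : Tendsto (fun y => w (y + 1) / w y) atTop (𝓝 r)) (P : ℝ[X]) :
    Summable fun y : ℕ => P.eval (y : ℝ) * w y := by
  set d := P.natDegree
  have hmajorant : Summable fun y : ℕ => ((y : ℝ) + 1) ^ d * w y := by
    refine summable_of_ratio_test_tendsto_lt_one hr
      (Eventually.of_forall fun y => by have := hw y; positivity) ?_
    have hquot := tendsto_add_mul_div_add_mul_atTop_nhds (2 : ℝ) 1 1 one_ne_zero
    rw [div_one] at hquot
    have hlim := (hquot.pow d).mul hratio
    rw [one_pow, one_mul] at hlim
    refine hlim.congr fun y => ?_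
    have := hw y
    have := hw (y + 1)
    rw [Real.norm_of_nonneg (by positivity), Real.norm_of_nonneg (by positivity), div_pow]
    push_cast
    field_simp
    ring
  have hbigO : (fun y : ℕ => P.eval (y : ℝ)) =O[atTop] fun y : ℕ => ((y : ℝ) + 1) ^ d := by
    have hdeg : P.degree ≤ ((X + C 1 : ℝ[X]) ^ d).degree := by
      rw [degree_pow, degree_X_add_C, nsmul_one]
      exact degree_le_natDegree
    simpa [Function.comp_def] using
      (isBigO_atTop_of_degree_le _ _ hdeg).comp_tendsto tendsto_natCast_atTop_atTop
  exact summable_of_isBigO_nat hmajorant (hbigO.mul (isBigO_refl w atTop))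

lemma summable_eval_mul_meixnerWeight {a β : ℝ} (ha : 0 < a) (ha1 : a < 1) (hβ : 0 < β)
    (P : ℝ[X]) : Summable fun y : ℕ => P.eval (y : ℝ) * meixnerWeight a β y := by
  refine summable_eval_mul_of_tendsto_ratio (meixnerWeight_pos ha hβ) ha1 ?_ P
  have hlim := (tendsto_add_mul_div_add_mul_atTop_nhds β 1 1 one_ne_zero).const_mul a
  rw [div_one, mul_one] at hlim
  exact hlim.congr fun y => by rw [meixnerWeight_succ_div ha.ne' hβ y]; ring

section Shift

variable {α : Type*} [NonUnitalNonAssocSemiring α] (f g : ℕ → α) (j : ℕ)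

lemma support_mul_ite_le_sub_subset :
    Function.support (fun x => f x * if j ≤ x then g (x - j) else 0) ⊆ Set.range (· + j) :=
  fun x hx => by_contra fun h => hx <| by
    dsimp only
    rw [if_neg fun hjx => h ⟨x - j, Nat.sub_add_cancel hjx⟩, mul_zero]

variable [TopologicalSpace α]

lemma summable_mul_ite_le_sub_iff :
    (Summable fun x => f x * if j ≤ x then g (x - j) else 0) ↔
      Summable fun y => f (y + j) * g y := by
  rw [← (add_left_injective j).summable_iff fun x hx =>
    Function.notMem_support.mp (mt (support_mul_ite_le_sub_subset f g j ·) hx)]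
  simp [Function.comp_def]

lemma tsum_mul_ite_le_sub :
    ∑' x, (f x * if j ≤ x then g (x - j) else 0) = ∑' y, f (y + j) * g y := by
  rw [← (add_left_injective j).tsum_eq (support_mul_ite_le_sub_subset f g j)]
  simp

end Shift

lemma fwdDiff_iter_eval_natCast (Q : ℝ[X]) (n y : ℕ) :
    (fwdDiff 1)^[n] Q.eval (y : ℝ) =
      ∑ j ∈ range (n + 1), (-1) ^ (n - j) * (n.choose j : ℝ) * Q.eval ((y + j : ℕ) : ℝ) := by
  rw [fwdDiff_iter_eq_sum_shift]
  refine sum_congr rfl fun j _ => ?_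
  simp [zsmul_eq_mul]

theorem tsum_eval_mul_meixnerFn_mul_meixnerWeight {a c : ℝ} (ha : 0 < a) (ha1 : a < 1)
    (hc : 0 < c) (Q : ℝ[X]) (n : ℕ) :
    ∑' x : ℕ, Q.eval (x : ℝ) * (meixnerFn a c n x * meixnerWeight a c x) =
      (a / (1 - a)) ^ n / n ! * ∑' y : ℕ, (fwdDiff 1)^[n] Q.eval (y : ℝ) *
        meixnerWeight a (c + n) y := by
  have hc_ne : ∀ k : ℕ, c ≠ -k := fun k h => by linarith [(k.cast_nonneg : (0 : ℝ) ≤ k)]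
  have hshift (j : ℕ) :
      Summable fun y : ℕ => Q.eval ((y + j : ℕ) : ℝ) * meixnerWeight a (c + n) y := by
    refine (summable_eval_mul_meixnerWeight ha ha1 (β := c + n) (by positivity)
      (Q.comp (X + C (j : ℝ)))).congr fun y => ?_
    simp only [eval_comp, eval_add, eval_X, eval_C, Nat.cast_add]
  calc _ = ∑' x : ℕ, ∑ j ∈ range (n + 1), (a / (1 - a)) ^ n / n ! *
        ((-1) ^ (n - j) * (n.choose j : ℝ)) *
          (Q.eval (x : ℝ) * if j ≤ x then meixnerWeight a (c + n) (x - j) else 0) := by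
        refine tsum_congr fun x => ?_
        rw [meixnerFn_mul_meixnerWeight ha.ne' hc_ne, mul_sum, mul_sum]
        exact sum_congr rfl fun j _ => by ring
    _ = ∑ j ∈ range (n + 1), (a / (1 - a)) ^ n / n ! * ((-1) ^ (n - j) * (n.choose j : ℝ)) *
          ∑' y : ℕ, Q.eval ((y + j : ℕ) : ℝ) * meixnerWeight a (c + n) y := by
        have hsummable (j : ℕ) : Summable fun x : ℕ =>
            Q.eval (x : ℝ) * if j ≤ x then meixnerWeight a (c + n) (x - j) else 0 :=
          (summable_mul_ite_le_sub_iff (fun x : ℕ => Q.eval (x : ℝ)) _ j).mpr (hshift j)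
        rw [Summable.tsum_finsetSum fun j _ => (hsummable j).mul_left _]
        refine sum_congr rfl fun j _ => ?_
        rw [tsum_mul_left, tsum_mul_ite_le_sub (fun x : ℕ => Q.eval (x : ℝ))]
    _ = (a / (1 - a)) ^ n / n ! * ∑ j ∈ range (n + 1), ∑' y : ℕ,
          (-1) ^ (n - j) * (n.choose j : ℝ) *
            (Q.eval ((y + j : ℕ) : ℝ) * meixnerWeight a (c + n) y) := by
        rw [mul_sum]
        exact sum_congr rfl fun j _ => by rw [tsum_mul_left, mul_assoc]
    _ = _ := by
        rw [← Summable.tsum_finsetSum fun j _ => (hshift j).mul_left _]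
        simp_rw [fwdDiff_iter_eval_natCast Q n, sum_mul, mul_assoc]

theorem tsum_eval_mul_meixnerFn_mul_meixnerWeight_eq_zero {a c : ℝ} (ha : 0 < a) (ha1 : a < 1)
    (hc : 0 < c) {Q : ℝ[X]} {n : ℕ} (hQ : Q.natDegree < n) :
    ∑' x : ℕ, Q.eval (x : ℝ) * (meixnerFn a c n x * meixnerWeight a c x) = 0 := by
  simp [tsum_eval_mul_meixnerFn_mul_meixnerWeight ha ha1 hc,
    Polynomial.fwdDiff_iter_eq_zero_of_degree_lt hQ]

theorem meixner_orthogonality (a c : ℝ) (ha : 0 < a) (ha1 : a < 1) (hc : 0 < c)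
    (m n : ℕ) (hmn : m ≠ n) :
    ∑' x : ℕ, meixnerFn a c m x * meixnerFn a c n x * a ^ x
        * Real.Gamma ((x : ℝ) + c) / (x.factorial : ℝ) = 0 := by
  have hsummand (k l : ℕ) (x : ℕ) :
      meixnerFn a c k x * meixnerFn a c l x * a ^ x * Real.Gamma ((x : ℝ) + c) / x.factorial =
        (meixnerPoly a c k).eval (x : ℝ) * (meixnerFn a c l x * meixnerWeight a c x) := by
    rw [meixnerFn_eq_eval a c k, meixnerWeight]
    ring
  rcases hmn.lt_or_gt with hlt | hgt
  · simp_rw [hsummand m n]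
    exact tsum_eval_mul_meixnerFn_mul_meixnerWeight_eq_zero ha ha1 hc
      ((natDegree_meixnerPoly_le a c m).trans_lt hlt)
  · simp_rw [mul_comm (meixnerFn a c m _), hsummand n m]
    exact tsum_eval_mul_meixnerFn_mul_meixnerWeight_eq_zero ha ha1 hc
      ((natDegree_meixnerPoly_le a c n).trans_lt hgt)
end

section
/- For every n ≥ 0 and c real with c ≠ 0, -1, -2, ..., the limit lim_{a→1} (a-1)^n m_n^{a,c}(x/(1-a)) = L_n^{c-1}(x) holds uniformly on compact subsets, where L_n^α is the Laguerre polynomial. -/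
/-- The Laguerre polynomial `L_n^α(x) = ∑_{j=0}^n ((-x)^j/j!) binom(n+α, n-j)`. -/
noncomputable def laguerreFn (α : ℝ) (n : ℕ) (x : ℝ) : ℝ :=
  ∑ j ∈ Finset.range (n + 1), (-x) ^ j / (j.factorial : ℝ) * gbinom ((n : ℝ) + α) (n - j)

open Finset
open scoped Nat

namespace Ring

variable {R : Type*} [CommRing R] [BinomialRing R]

theorem sum_range_choose_mul_choose (r s : R) (N : ℕ) :
    ∑ m ∈ range (N + 1), choose r m * choose s (N - m) = choose (r + s) N := by
  rw [add_choose_eq N (Commute.all r s), Nat.sum_antidiagonal_eq_sum_range_succ_mk]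

theorem sum_one_add_pow_mul_choose_mul_choose (t y z : R) (n : ℕ) :
    ∑ j ∈ range (n + 1), (1 + t) ^ j * choose y j * choose z (n - j) =
      ∑ k ∈ range (n + 1), t ^ k * choose y k * choose (y + z - k) (n - k) := by
  have vandermonde (k : ℕ) (hk : k ≤ n) :
      ∑ j ∈ Ico k (n + 1), (j.choose k : R) * choose y j * choose z (n - j) =
        choose y k * choose (y + z - k) (n - k) := by
    rw [sum_Ico_eq_sum_range, show n + 1 - k = n - k + 1 by omega,
      show y + z - k = (y - k) + z by ring, ← sum_range_choose_mul_choose, mul_sum]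
    refine sum_congr rfl fun m _ => ?_
    rw [← nsmul_eq_mul, choose_smul_choose y (k.le_add_right m),
      Nat.add_sub_cancel_left, Nat.sub_add_eq, mul_assoc]
  calc
    _ = ∑ j ∈ range (n + 1), ∑ k ∈ range (j + 1),
          t ^ k * ((j.choose k : R) * choose y j * choose z (n - j)) := by
      refine sum_congr rfl fun j _ => ?_
      rw [add_comm, add_pow, sum_mul, sum_mul]
      exact sum_congr rfl fun k _ => by ring
    _ = ∑ k ∈ range (n + 1), ∑ j ∈ Ico k (n + 1),
          t ^ k * ((j.choose k : R) * choose y j * choose z (n - j)) := by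
      simp only [range_eq_Ico]
      exact (sum_Ico_Ico_comm 0 (n + 1) _).symm
    _ = _ := sum_congr rfl fun k hk => by
      rw [← mul_sum, vandermonde k (Nat.lt_succ_iff.mp (mem_range.mp hk)), mul_assoc]

end Ring

theorem gbinom_eq_choose (y : ℝ) (j : ℕ) : gbinom y j = Ring.choose y j := by
  have hprod : (descPochhammer ℤ j).smeval y = ∏ i ∈ range j, (y - i) := by
    induction j with
    | zero => simp
    | succ m ih =>
      simp [prod_range_succ, ← ih, descPochhammer_succ_right, Polynomial.smeval_mul,
        Polynomial.smeval_sub, Polynomial.smeval_X, Polynomial.smeval_natCast]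
  rw [gbinom, Ring.choose_eq_smul, hprod, smul_eq_mul, inv_mul_eq_div]

theorem gbinom_div_mul_pow {h : ℝ} (hh : h ≠ 0) (x : ℝ) (k : ℕ) :
    gbinom (x / h) k * h ^ k = (∏ i ∈ range k, (x - i * h)) / k ! := by
  rw [gbinom, div_mul_eq_mul_div, ← card_range k, ← prod_const, card_range, ← prod_mul_distrib]
  congr 1
  exact prod_congr rfl fun i _ => by field_simp

theorem gbinom_neg_sub {c : ℝ} {k n : ℕ} (hk : k ≤ n) :
    gbinom (-c - k) (n - k) = (-1) ^ (n - k) * gbinom (n + (c - 1)) (n - k) := by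
  rw [gbinom_eq_choose, gbinom_eq_choose, neg_sub_left, Ring.choose_neg, Units.smul_def,
    Int.coe_negOnePow_natCast, zsmul_eq_mul, Nat.cast_sub hk]
  push_cast
  ring_nf

noncomputable def scaledMeixner (c : ℝ) (n : ℕ) (a x : ℝ) : ℝ :=
  ∑ k ∈ range (n + 1),
    (-1) ^ k * a ^ (n - k) * (∏ i ∈ range k, (x - i * (1 - a))) / k ! * gbinom (n + (c - 1)) (n - k)

theorem scaledMeixner_eq {a : ℝ} (ha₀ : a ≠ 0) (ha₁ : a ≠ 1) (c : ℝ) (n : ℕ) (x : ℝ) :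
    scaledMeixner c n a x = (a - 1) ^ n * meixnerFn a c n (x / (1 - a)) := by
  have h₁ : 1 - a ≠ 0 := sub_ne_zero.2 ha₁.symm
  have hpow (j : ℕ) : a ^ (-(j : ℤ)) = (1 + (a⁻¹ - 1)) ^ j := by simp
  simp only [meixnerFn, hpow, gbinom_eq_choose]
  rw [Ring.sum_one_add_pow_mul_choose_mul_choose, scaledMeixner, ← mul_assoc, mul_sum]
  refine sum_congr rfl fun k hk => ?_
  obtain ⟨m, rfl⟩ := Nat.exists_eq_add_of_le' (Nat.lt_succ_iff.mp (mem_range.mp hk))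
  have hy : x / (1 - a) + (-(x / (1 - a)) - c) - k = -c - k := by ring
  have hscale := gbinom_div_mul_pow h₁ x k
  rw [← eq_div_iff (pow_ne_zero k h₁)] at hscale
  rw [hy, ← gbinom_eq_choose, ← gbinom_eq_choose, gbinom_neg_sub (Nat.le_add_left k m), hscale,
    Nat.add_sub_cancel, show a - 1 = -(1 - a) by ring, show a⁻¹ - 1 = (1 - a) / a by field_simp,
    ← mul_pow, show -(1 - a) * (a / (1 - a)) = -a by field_simp, pow_add, div_pow]
  field_simp
  ring_nf
  rw [pow_mul', neg_one_sq, one_pow, mul_one]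

theorem continuous_scaledMeixner (c : ℝ) (n : ℕ) :
    Continuous ↿(scaledMeixner c n) := by
  unfold scaledMeixner
  fun_prop

theorem scaledMeixner_one (c : ℝ) (n : ℕ) (x : ℝ) :
    scaledMeixner c n 1 x = laguerreFn (c - 1) n x := by
  simp only [scaledMeixner, laguerreFn, sub_self, mul_zero, sub_zero, one_pow, mul_one,
    prod_const, card_range, neg_pow x]

theorem Continuous.tendstoUniformlyOn {α β γ : Type*} [UniformSpace α]
    [WeaklyLocallyCompactSpace α] [UniformSpace β] [UniformSpace γ] {f : α → β → γ}
    (hf : Continuous ↿f) (a : α) {K : Set β} (hK : IsCompact K) :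
    TendstoUniformlyOn f (f a) (nhds a) K := by
  have := isCompact_iff_compactSpace.mp hK
  rw [tendstoUniformlyOn_iff_tendstoUniformly_comp_coe]
  exact Continuous.tendstoUniformly (fun a (x : K) => f a x)
    (hf.comp (continuous_fst.prodMk (continuous_subtype_val.comp continuous_snd))) a

theorem meixner_to_laguerre_limit_general (n : ℕ) (c : ℝ)
    (K : Set ℝ) (hK : IsCompact K) :
    TendstoUniformlyOn
      (fun (a : ℝ) (x : ℝ) => (a - 1) ^ n * meixnerFn a c n (x / (1 - a)))
      (fun x => laguerreFn (c - 1) n x)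
      (nhdsWithin (1 : ℝ) {(1 : ℝ)}ᶜ) K := by
  have hlim : TendstoUniformlyOn (scaledMeixner c n) (fun x => laguerreFn (c - 1) n x)
      (nhdsWithin 1 {1}ᶜ) K := by
    have h := (continuous_scaledMeixner c n).tendstoUniformlyOn 1 hK
    simp only [funext (scaledMeixner_one c n)] at h
    exact fun u hu => (h u hu).filter_mono nhdsWithin_le_nhds
  refine hlim.congr ?_
  filter_upwards [self_mem_nhdsWithin, nhdsWithin_le_nhds (lt_mem_nhds one_pos)]
    with a ha₁ ha₀ x _
  exact scaledMeixner_eq ha₀.ne' ha₁ c n x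

theorem meixner_to_laguerre_limit (n : ℕ) (c : ℝ) (hc : ∀ k : ℕ, c ≠ -(k : ℝ))
    (K : Set ℝ) (hK : IsCompact K) :
    TendstoUniformlyOn
      (fun (a : ℝ) (x : ℝ) => (a - 1) ^ n * meixnerFn a c n (x / (1 - a)))
      (fun x => laguerreFn (c - 1) n x)
      (nhdsWithin (1 : ℝ) {(1 : ℝ)}ᶜ) K :=
  meixner_to_laguerre_limit_general n c K hK
end

section
/- For the pair F = (F_1, F_2) with F_1 = {1,2}, F_2 = ∅, the exceptional Laguerre polynomials L_n^{α;F} satisfy for all n ≥ 0 the seven-term recurrence Σ_{j=-3}^{3} A_j(n) L_{n+j}^{α;F}(x) = [x(x^2 - 3x(α+1) + 3(α+1)(α+2))/6] L_n^{α;F}(x), where A_{-3}(n) = -(n+α)(n+α-1)(n+α-2)/6, A_{-2}(n) = (n+α)(n+α-1)(n-2), A_{-1}(n) = -(n+α)(5n+α-9)(n-1)/2, A_0(n) = 10n^3/3 - (8-2α)n^2 - (4α - 8/3)n + α^3/6 + α^2 + 11α/6 + 1, A_1(n) = -(5n+α-4)(n+1)(n-2)/2, A_2(n) = (n-1)(n^2-4),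 A_3(n) = -(n+3)(n-1)(n-2)/6. -/
open Polynomial

/-- The Laguerre polynomial `L_n^α` as a polynomial in `x`. -/
noncomputable def laguerreP (α : ℝ) (n : ℕ) : Polynomial ℝ :=
  ∑ j ∈ Finset.range (n + 1),
    Polynomial.C ((-1 : ℝ) ^ j / (j.factorial : ℝ) * gbinom ((n : ℝ) + α) (n - j)) * X ^ j

/-- Laguerre polynomial with integer index; zero for negative index. -/
noncomputable def laguerreZ (α : ℝ) (m : ℤ) : Polynomial ℝ :=
  if m < 0 then 0 else laguerreP α m.toNat

/-- The exceptional Laguerre polynomial `L_n^{α;F}` for `F = ({1,2}, ∅)`, evaluated at `x`: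
a `3×3` Wronskian determinant. -/
noncomputable def excLag12 (α : ℝ) (m : ℤ) (x : ℝ) : ℝ :=
  Matrix.det
    !![(laguerreZ α m).eval x, (derivative (laguerreZ α m)).eval x,
         (derivative (derivative (laguerreZ α m))).eval x;
       (laguerreP α 1).eval x, (derivative (laguerreP α 1)).eval x,
         (derivative (derivative (laguerreP α 1))).eval x;
       (laguerreP α 2).eval x, (derivative (laguerreP α 2)).eval x,
         (derivative (derivative (laguerreP α 2))).eval x]

/-!
Expanding the Wronskian along its first row and using `L^α_m = L^{α+2}_m - 2 L^{α+2}_{m-1} +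
L^{α+2}_{m-2}` and `(L^α_m)' = -L^{α+1}_{m-1}`, the exceptional polynomial `L^{α;F}_m` becomes a
combination of the five consecutive polynomials `L^{α+2}_m, …, L^{α+2}_{m-4}` with coefficients
polynomial in `m` and `α` (`excLagExpansion`). On the `L^{α+2}_k`, multiplication by `x` acts through
the three-term recurrence as a tridiagonal operator `J`, so multiplication by the cubic
`Q(x) = x (x² - 3x(α+1) + 3(α+1)(α+2)) / 6` acts as `Q(J)`, and the recurrence becomes an identity
between finite combinations of the `L^{α+2}_k`. With `L_k = 0` for `k < 0` every recurrence used holds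
for all `k ∈ ℤ`, so small `n` needs no separate treatment.
-/

lemma gbinom_zero (y : ℝ) : gbinom y 0 = 1 := by simp [gbinom]

lemma prod_range_succ_sub_natCast (y : ℝ) (k : ℕ) :
    ∏ i ∈ Finset.range (k + 1), (y + 1 - (i : ℝ)) = (y + 1) * ∏ i ∈ Finset.range k, (y - i) := by
  rw [Finset.prod_range_succ', mul_comm]
  congr 1
  · simp
  · refine Finset.prod_congr rfl fun i _ => ?_
    push_cast; ring

lemma succ_mul_gbinom_succ (y : ℝ) (k : ℕ) :
    ((k : ℝ) + 1) * gbinom (y + 1) (k + 1) = (y + 1) * gbinom y k := by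
  rw [gbinom, gbinom, prod_range_succ_sub_natCast, Nat.factorial_succ]
  push_cast
  field_simp

lemma gbinom_succ_succ (y : ℝ) (k : ℕ) :
    gbinom (y + 1) (k + 1) = gbinom y (k + 1) + gbinom y k := by
  rw [gbinom, gbinom, gbinom, prod_range_succ_sub_natCast, Finset.prod_range_succ,
    Nat.factorial_succ]
  push_cast
  field_simp
  ring

lemma coeff_laguerreP (α : ℝ) (n j : ℕ) :
    (laguerreP α n).coeff j =
      if j ≤ n then (-1) ^ j / (j.factorial : ℝ) * gbinom ((n : ℝ) + α) (n - j) else 0 := by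
  simp only [laguerreP, finsetSum_coeff, coeff_C_mul, coeff_X_pow, mul_ite, mul_one, mul_zero,
    Finset.sum_ite_eq, Finset.mem_range, Nat.lt_succ_iff]

lemma laguerreP_zero (α : ℝ) : laguerreP α 0 = 1 := by
  simp [laguerreP, gbinom_zero]

lemma laguerreP_succ_eq_sub (α : ℝ) (n : ℕ) :
    laguerreP α (n + 1) = laguerreP (α + 1) (n + 1) - laguerreP (α + 1) n := by
  ext j
  simp only [coeff_sub, coeff_laguerreP]
  rcases lt_trichotomy j (n + 1) with hj | rfl | hj
  · obtain ⟨k, rfl⟩ : ∃ k, n = j + k := ⟨n - j, by omega⟩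
    rw [if_pos hj.le, if_pos hj.le, if_pos (by omega), show j + k + 1 - j = k + 1 by omega,
      show j + k - j = k by omega, ← add_assoc, gbinom_succ_succ,
      show ((j + k : ℕ) : ℝ) + (α + 1) = (j + k + 1 : ℕ) + α by push_cast; ring]
    ring
  · simp [gbinom_zero]
  · simp [show ¬ j ≤ n + 1 by omega, show ¬ j ≤ n by omega]

lemma derivative_laguerreP_succ (α : ℝ) (n : ℕ) :
    derivative (laguerreP α (n + 1)) = -laguerreP (α + 1) n := by
  ext j
  simp only [coeff_derivative, coeff_neg, coeff_laguerreP, Nat.add_le_add_iff_right,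
    Nat.add_sub_add_right]
  split_ifs
  · rw [Nat.factorial_succ]
    push_cast
    rw [add_right_comm (n : ℝ) 1 α, add_assoc]
    field_simp
    ring
  · simp

lemma X_mul_laguerreP (α : ℝ) (n : ℕ) :
    X * laguerreP (α + 1) n
      = C ((n : ℝ) + α + 1) * laguerreP α n - C ((n : ℝ) + 1) * laguerreP α (n + 1) := by
  ext (_ | j)
  · simp only [coeff_X_mul_zero, coeff_sub, coeff_C_mul, coeff_laguerreP, zero_le, if_true,
      Nat.sub_zero, Nat.factorial_zero, pow_zero, Nat.cast_one, div_one, one_mul]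
    rw [show ((n + 1 : ℕ) : ℝ) + α = (n + α) + 1 by push_cast; ring]
    linear_combination succ_mul_gbinom_succ ((n : ℝ) + α) n
  · simp only [coeff_X_mul, coeff_sub, coeff_C_mul, coeff_laguerreP]
    rcases lt_trichotomy j n with hj | rfl | hj
    · obtain ⟨k, rfl⟩ : ∃ k, n = j + k + 1 := ⟨n - j - 1, by omega⟩
      rw [if_pos hj.le, if_pos (by omega), if_pos (by omega), show j + k + 1 - j = k + 1 by omega,
        show j + k + 1 - (j + 1) = k by omega, show j + k + 1 + 1 - (j + 1) = k + 1 by omega,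
        show ((j + k + 1 + 1 : ℕ) : ℝ) + α = ((j + k + 1 : ℕ) + α) + 1 by push_cast; ring,
        ← add_assoc, Nat.factorial_succ, pow_succ]
      have h := succ_mul_gbinom_succ ((j + k + 1 : ℕ) + α) k
      push_cast at h ⊢
      field_simp
      linear_combination -h
    · simp only [le_refl, if_true, tsub_self, gbinom_zero, mul_one, add_le_iff_nonpos_right,
        nonpos_iff_eq_zero, one_ne_zero, if_false, mul_zero, Nat.factorial_succ, Nat.cast_mul,
        Nat.cast_add, Nat.cast_one, zero_sub]
      field_simp
      ring
    · simp [show ¬ j ≤ n by omega, show ¬ j + 1 ≤ n by omega, show ¬ j + 1 ≤ n + 1 by omega]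

lemma laguerreP_one (α : ℝ) : laguerreP α 1 = C (α + 1) - X := by
  have h := X_mul_laguerreP α 0
  simp only [laguerreP_zero, Nat.cast_zero, zero_add, mul_one, map_one, one_mul] at h
  linear_combination h

lemma laguerreP_two (α : ℝ) :
    laguerreP α 2 = C ((α + 1) * (α + 2) / 2) - C (α + 2) * X + C (1 / 2) * X ^ 2 := by
  simp only [laguerreP, Nat.reduceAdd, gbinom, Nat.cast_ofNat, map_mul, Finset.sum_range_succ,
    Finset.range_one, Finset.sum_singleton, pow_zero, Nat.factorial, Nat.cast_one, ne_eq, one_ne_zero,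
    not_false_eq_true, div_self, map_one, tsub_zero, Finset.prod_range_succ, Finset.prod_singleton,
    CharP.cast_eq_zero, Nat.factorial_two, one_mul, mul_one, pow_one, Nat.succ_eq_add_one,
    zero_add, div_one, map_neg, Nat.add_one_sub_one, Nat.factorial_one, map_add, neg_mul, neg_add_rev,
    even_two, Even.neg_pow, one_pow, one_div, tsub_self, Finset.range_zero, Finset.prod_empty,
    Nat.factorial_zero, add_left_inj]
  rw [show (2 + α) * (2 + α - 1) / 2 = (α + 1) * (α + 2) / 2 by ring]
  ring

lemma laguerreZ_natCast (α : ℝ) (n : ℕ) : laguerreZ α n = laguerreP α n := by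
  simp [laguerreZ]

lemma laguerreZ_zero (α : ℝ) : laguerreZ α 0 = 1 := by
  simpa [laguerreP_zero] using laguerreZ_natCast α 0

lemma laguerreZ_of_neg (α : ℝ) {m : ℤ} (hm : m < 0) : laguerreZ α m = 0 := if_pos hm

lemma laguerreZ_eq_sub (α : ℝ) (m : ℤ) :
    laguerreZ α m = laguerreZ (α + 1) m - laguerreZ (α + 1) (m - 1) := by
  rcases lt_or_ge m 0 with hm | hm
  · simp [laguerreZ_of_neg _ hm, laguerreZ_of_neg _ (show m - 1 < 0 by omega)]
  obtain ⟨_ | n, rfl⟩ := Int.eq_ofNat_of_zero_le hm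
  · simp [laguerreZ_zero, laguerreZ_of_neg]
  · rw [Nat.cast_succ, add_sub_cancel_right, ← Nat.cast_succ, laguerreZ_natCast,
      laguerreZ_natCast, laguerreZ_natCast, laguerreP_succ_eq_sub]

lemma derivative_laguerreZ (α : ℝ) (m : ℤ) :
    derivative (laguerreZ α m) = -laguerreZ (α + 1) (m - 1) := by
  rcases lt_or_ge m 0 with hm | hm
  · simp [laguerreZ_of_neg _ hm, laguerreZ_of_neg _ (show m - 1 < 0 by omega)]
  obtain ⟨_ | n, rfl⟩ := Int.eq_ofNat_of_zero_le hm
  · simp [laguerreZ_zero, laguerreZ_of_neg]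
  · rw [Nat.cast_succ, add_sub_cancel_right, ← Nat.cast_succ, laguerreZ_natCast,
      laguerreZ_natCast, derivative_laguerreP_succ]

lemma X_mul_laguerreZ (α : ℝ) (m : ℤ) :
    X * laguerreZ (α + 1) m
      = C ((m : ℝ) + α + 1) * laguerreZ α m - C ((m : ℝ) + 1) * laguerreZ α (m + 1) := by
  rcases lt_or_ge m 0 with hm | hm
  · rcases eq_or_lt_of_le (show m + 1 ≤ 0 by omega) with hm' | hm'
    · simp [laguerreZ_of_neg _ hm, hm', show (m : ℝ) + 1 = 0 by exact_mod_cast hm']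
    · simp [laguerreZ_of_neg _ hm, laguerreZ_of_neg _ hm']
  obtain ⟨n, rfl⟩ := Int.eq_ofNat_of_zero_le hm
  rw [← Nat.cast_succ, laguerreZ_natCast, laguerreZ_natCast, laguerreZ_natCast, X_mul_laguerreP]
  simp

lemma X_mul_laguerreZ_eq_three_term (α : ℝ) (m : ℤ) :
    X * laguerreZ α m = C (2 * (m : ℝ) + 1 + α) * laguerreZ α m
      - C ((m : ℝ) + 1) * laguerreZ α (m + 1) - C ((m : ℝ) + α) * laguerreZ α (m - 1) := by
  have hsub := laguerreZ_eq_sub α m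
  have hm := X_mul_laguerreZ α m
  have hm₁ := X_mul_laguerreZ α (m - 1)
  rw [sub_add_cancel] at hm₁
  simp only [map_add, map_sub, map_mul, map_one, map_ofNat, Int.cast_sub, Int.cast_one] at hm hm₁ ⊢
  linear_combination X * hsub + hm - hm₁

def laguerreJacobi {R : Type*} [CommRing R] (β : R) (b : ℤ → R) (k : ℤ) : R :=
  (2 * k + 1 + β) * b k - (k + 1) * b (k + 1) - (k + β) * b (k - 1)

section Jacobi

variable {R : Type*} [CommRing R] {β x : R} {b : ℤ → R}

lemma mul_laguerreJacobi (c : R) (b : ℤ → R) (k : ℤ) :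
    c * laguerreJacobi β b k = laguerreJacobi β (fun k => c * b k) k := by
  simp only [laguerreJacobi]; ring

lemma pow_mul_eq_laguerreJacobi_iterate (hb : ∀ k, x * b k = laguerreJacobi β b k) (j : ℕ)
    (k : ℤ) : x ^ j * b k = (laguerreJacobi β)^[j] b k := by
  induction j generalizing b with
  | zero => simp
  | succ j ih =>
    have hJb : ∀ k, x * laguerreJacobi β b k = laguerreJacobi β (laguerreJacobi β b) k := by
      intro k
      rw [mul_laguerreJacobi]
      exact congrArg (laguerreJacobi β · k) (funext hb)
    rw [pow_succ, mul_assoc, hb, Function.iterate_succ_apply, ih hJb]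

end Jacobi

lemma laguerreZ_eval_three_term (β x : ℝ) (k : ℤ) :
    x * (laguerreZ β k).eval x = laguerreJacobi β (fun k => (laguerreZ β k).eval x) k := by
  simpa [laguerreJacobi] using congrArg (eval x) (X_mul_laguerreZ_eq_three_term β k)

def excLagExpansion {K : Type*} [Field K] (α : K) (b : ℤ → K) (m : ℤ) : K :=
  -((m - 1) * (m - 2) / 2) * b m + 2 * (m - 1) * (m - 2) * b (m - 1)
    - (m - 2) * (3 * m - 2 + α) * b (m - 2) + 2 * (m - 2) * (m + α) * b (m - 3)
    - (m + α) * (m + α - 1) / 2 * b (m - 4)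

theorem excLagExpansion_seven_term {K : Type*} [Field K] [CharZero K] (α x : K) (b : ℤ → K)
    (hb : ∀ k, x * b k = laguerreJacobi (α + 2) b k) (n : ℤ) :
    -(((n : K) + α) * ((n : K) + α - 1) * ((n : K) + α - 2) / 6) * excLagExpansion α b (n - 3)
      + ((n : K) + α) * ((n : K) + α - 1) * ((n : K) - 2) * excLagExpansion α b (n - 2)
      - ((n : K) + α) * (5 * (n : K) + α - 9) * ((n : K) - 1) / 2 * excLagExpansion α b (n - 1)
      + (10 * (n : K) ^ 3 / 3 - (8 - 2 * α) * (n : K) ^ 2 - (4 * α - 8 / 3) * (n : K)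
            + α ^ 3 / 6 + α ^ 2 + 11 * α / 6 + 1) * excLagExpansion α b n
      - (5 * (n : K) + α - 4) * ((n : K) + 1) * ((n : K) - 2) / 2 * excLagExpansion α b (n + 1)
      + ((n : K) - 1) * ((n : K) ^ 2 - 4) * excLagExpansion α b (n + 2)
      - ((n : K) + 3) * ((n : K) - 1) * ((n : K) - 2) / 6 * excLagExpansion α b (n + 3)
    = x * (x ^ 2 - 3 * x * (α + 1) + 3 * (α + 1) * (α + 2)) / 6 * excLagExpansion α b n := by
  set J := laguerreJacobi (α + 2)
  have hQ : ∀ k, J (J (J b)) k / 6 - (α + 1) / 2 * J (J b) k + (α + 1) * (α + 2) / 2 * J b k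
      = x * (x ^ 2 - 3 * x * (α + 1) + 3 * (α + 1) * (α + 2)) / 6 * b k := by
    intro k
    have h1 := pow_mul_eq_laguerreJacobi_iterate hb 1 k
    have h2 := pow_mul_eq_laguerreJacobi_iterate hb 2 k
    have h3 := pow_mul_eq_laguerreJacobi_iterate hb 3 k
    simp only [Function.iterate_succ_apply', Function.iterate_zero_apply] at h1 h2 h3
    linear_combination -h3 / 6 + (α + 1) / 2 * h2 - (α + 1) * (α + 2) / 2 * h1
  simp only [J, laguerreJacobi] at hQ
  simp only [excLagExpansion]
  linear_combination (norm := skip)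
    -((n - 1) * (n - 2) / 2 : K) * hQ n + 2 * (n - 1) * (n - 2) * hQ (n - 1)
      - (n - 2) * (3 * n - 2 + α) * hQ (n - 2) + 2 * (n - 2) * (n + α) * hQ (n - 3)
      - (n + α) * (n + α - 1) / 2 * hQ (n - 4)
  push_cast
  ring_nf

lemma excLag12_eq (α : ℝ) (m : ℤ) (x : ℝ) :
    excLag12 α m x = -(laguerreZ α m).eval x - (α + 1 - x) * (derivative (laguerreZ α m)).eval x
      - (x ^ 2 / 2 - (α + 1) * x + (α + 1) * (α + 2) / 2)
        * (derivative (derivative (laguerreZ α m))).eval x := by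
  rw [excLag12, Matrix.det_fin_three, laguerreP_one, laguerreP_two]
  simp only [map_add, map_one, eval_sub, eval_add, eval_C, eval_one, eval_X, derivative_sub,
    derivative_C, derivative_one, add_zero, derivative_X, zero_sub, eval_neg,
    derivative_neg, neg_zero, eval_zero, one_div, eval_mul, eval_pow, derivative_mul, zero_mul,
    mul_one, zero_add, neg_add_rev, derivative_X_pow_succ, Nat.cast_one, pow_one, Matrix.of_apply,
    Matrix.cons_val', Matrix.cons_val_zero, Matrix.cons_val_fin_one, Matrix.cons_val_one, mul_neg,
    Matrix.cons_val, neg_mul, mul_zero, sub_zero, sub_neg_eq_add]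
  ring

lemma excLag12_eq_excLagExpansion (α x : ℝ) (m : ℤ) :
    excLag12 α m x = excLagExpansion α (fun k => (laguerreZ (α + 2) k).eval x) m := by
  have h₂ : α + 1 + 1 = α + 2 := by ring
  have hm₂ : m - 1 - 1 = m - 2 := by ring
  have hL := laguerreZ_eq_sub α m
  rw [laguerreZ_eq_sub (α + 1) m, laguerreZ_eq_sub (α + 1) (m - 1), h₂, hm₂] at hL
  have hD := derivative_laguerreZ α m
  rw [laguerreZ_eq_sub (α + 1) (m - 1), h₂, hm₂] at hD
  have hDD : derivative (derivative (laguerreZ α m)) = laguerreZ (α + 2) (m - 2) := by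
    rw [derivative_laguerreZ, derivative_neg, derivative_laguerreZ, h₂, hm₂, neg_neg]
  have hJ := laguerreZ_eval_three_term (α + 2) x
  rw [excLag12_eq, hDD, hD, hL, excLagExpansion]
  simp only [laguerreJacobi] at hJ
  simp only [eval_sub, eval_neg]
  -- the terms `-x b (m-1) + (α+2) x b (m-2) - x² b (m-2) / 2` are removed by the recurrence at
  -- `m - 1`, `m - 2` (once multiplied by `x`) and `m - 3`
  linear_combination (norm := skip) ((m - 1 : ℝ) / 2 - 1) * hJ (m - 1)
    + (α + 2 - x / 2 - (2 * m - 1 + α) / 2) * hJ (m - 2) + ((m + α) / 2) * hJ (m - 3)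
  push_cast
  ring_nf

theorem excLaguerre_seven_term_recurrence (α : ℝ) (n : ℕ) (x : ℝ) :
    -(((n : ℝ) + α) * ((n : ℝ) + α - 1) * ((n : ℝ) + α - 2) / 6)
          * excLag12 α ((n : ℤ) - 3) x
      + ((n : ℝ) + α) * ((n : ℝ) + α - 1) * ((n : ℝ) - 2) * excLag12 α ((n : ℤ) - 2) x
      - ((n : ℝ) + α) * (5 * (n : ℝ) + α - 9) * ((n : ℝ) - 1) / 2
          * excLag12 α ((n : ℤ) - 1) x
      + (10 * (n : ℝ) ^ 3 / 3 - (8 - 2 * α) * (n : ℝ) ^ 2 - (4 * α - 8 / 3) * (n : ℝ)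
            + α ^ 3 / 6 + α ^ 2 + 11 * α / 6 + 1) * excLag12 α (n : ℤ) x
      - (5 * (n : ℝ) + α - 4) * ((n : ℝ) + 1) * ((n : ℝ) - 2) / 2
          * excLag12 α ((n : ℤ) + 1) x
      + ((n : ℝ) - 1) * ((n : ℝ) ^ 2 - 4) * excLag12 α ((n : ℤ) + 2) x
      - ((n : ℝ) + 3) * ((n : ℝ) - 1) * ((n : ℝ) - 2) / 6 * excLag12 α ((n : ℤ) + 3) x
    = x * (x ^ 2 - 3 * x * (α + 1) + 3 * (α + 1) * (α + 2)) / 6 * excLag12 α (n : ℤ) x := by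
  simp only [excLag12_eq_excLagExpansion]
  simpa only [Int.cast_natCast] using
    excLagExpansion_seven_term α x _ (laguerreZ_eval_three_term (α + 2) x) n
end
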